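/- Let a ∈ ℝ ∪ {−∞}, b ∈ ℝ ∪ {+∞} with a < b, and let c ≤ d be real numbers. Then the k-vector space Hom(k_{(a,b)}, k_{[c,d]}) is one-dimensional over k if (a,b) ∩ [c,d] ≠ ∅, and is zero otherwise. -/

import Mathlib

open CategoryTheory TopologicalSpace Set Topology

noncomputable section

variable (k : Type) [Field k]

/-- The support of the function `s : V ∩ I → k` is closed in `V`. -/
def SuppClosedIn (I V : Set ℝ) (s : ↥(V ∩ I) → k) : Prop :=
  ∀ x ∈ V, x ∈ closure {y : ℝ | ∃ h : y ∈ V ∩ I, s ⟨y, h⟩ ≠ 0} →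
    ∃ h : x ∈ V ∩ I, s ⟨x, h⟩ ≠ 0

lemma zero_locConst (I V : Set ℝ) :
    IsLocallyConstant (0 : ↥(V ∩ I) → k) ∧ SuppClosedIn k I V 0 := by
  constructor
  · exact IsLocallyConstant.const 0
  · intro x _ hx
    exfalso
    have h0 : {y : ℝ | ∃ h : y ∈ V ∩ I, (0 : ↥(V ∩ I) → k) ⟨y, h⟩ ≠ 0} = ∅ := by
      ext y; simp
    rw [h0, closure_empty] at hx
    exact hx

/-- The sections over `V` of the sheaf `k_I`: locally constant functions on `V ∩ I`
whose support is closed in `V`. -/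
def secSub (I V : Set ℝ) : Submodule k (↥(V ∩ I) → k) where
  carrier := {s | IsLocallyConstant s ∧ SuppClosedIn k I V s}
  zero_mem' := zero_locConst k I V
  add_mem' := by
    rintro s t ⟨hslc, hscl⟩ ⟨htlc, htcl⟩
    have hlc : IsLocallyConstant (s + t) := hslc.comp₂ htlc (· + ·)
    refine ⟨hlc, ?_⟩
    intro x hxV hxcl
    have hsub : {y : ℝ | ∃ h : y ∈ V ∩ I, (s + t) ⟨y, h⟩ ≠ 0}
        ⊆ {y : ℝ | ∃ h : y ∈ V ∩ I, s ⟨y, h⟩ ≠ 0}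
          ∪ {y : ℝ | ∃ h : y ∈ V ∩ I, t ⟨y, h⟩ ≠ 0} := by
      rintro y ⟨h, hy⟩
      by_cases hsy : s ⟨y, h⟩ = 0
      · refine Or.inr ⟨h, fun h0 => hy ?_⟩
        show s ⟨y, h⟩ + t ⟨y, h⟩ = 0
        rw [hsy, h0, add_zero]
      · exact Or.inl ⟨h, hsy⟩
    have hxVI : x ∈ V ∩ I := by
      have hcl2 := closure_mono hsub hxcl
      rw [closure_union] at hcl2
      rcases hcl2 with h | h
      · exact (hscl x hxV h).choose
      · exact (htcl x hxV h).choose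
    refine ⟨hxVI, ?_⟩
    have hA : IsClosed {y : ↥(V ∩ I) | (s + t) y ≠ 0} := by
      have h1 : IsOpen ((s + t) ⁻¹' {0}) := hlc {0}
      have h2 := h1.isClosed_compl
      have h3 : ((s + t) ⁻¹' {0})ᶜ = {y : ↥(V ∩ I) | (s + t) y ≠ 0} := by
        ext y; simp
      exact h3 ▸ h2
    have hmem : (⟨x, hxVI⟩ : ↥(V ∩ I)) ∈ closure {y : ↥(V ∩ I) | (s + t) y ≠ 0} := by
      rw [closure_subtype]
      have himg : Subtype.val '' {y : ↥(V ∩ I) | (s + t) y ≠ 0}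
          = {y : ℝ | ∃ h : y ∈ V ∩ I, (s + t) ⟨y, h⟩ ≠ 0} := by
        ext y
        constructor
        · rintro ⟨z, hz, rfl⟩; exact ⟨z.2, hz⟩
        · rintro ⟨h, hy⟩; exact ⟨⟨y, h⟩, hy, rfl⟩
      rw [himg]
      exact hxcl
    have := hA.closure_eq ▸ hmem
    exact this
  smul_mem' := by
    intro c s hs
    rcases hs with ⟨hlc, hcl⟩
    by_cases hc : c = 0
    · subst hc
      rw [zero_smul]
      exact zero_locConst k I V
    · constructor
      · exact hlc.comp (fun a => c • a)
      · intro x hxV hxcl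
        have hset : {y : ℝ | ∃ h : y ∈ V ∩ I, (c • s) ⟨y, h⟩ ≠ 0}
            = {y : ℝ | ∃ h : y ∈ V ∩ I, s ⟨y, h⟩ ≠ 0} := by
          ext y
          constructor
          · rintro ⟨h, hy⟩
            refine ⟨h, fun h0 => hy ?_⟩
            show c • s ⟨y, h⟩ = 0
            rw [h0, smul_zero]
          · rintro ⟨h, hy⟩
            exact ⟨h, by simpa [smul_eq_zero, hc] using hy⟩
        rw [hset] at hxcl
        obtain ⟨h, hy⟩ := hcl x hxV hxcl
        exact ⟨h, by simpa [smul_eq_zero, hc] using hy⟩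
/-- Restriction of sections. -/
def resFun (I : Set ℝ) {V W : Set ℝ} (h : W ⊆ V) (s : ↥(V ∩ I) → k) : ↥(W ∩ I) → k :=
  fun y => s ⟨y.1, ⟨h y.2.1, y.2.2⟩⟩

lemma resFun_mem (I : Set ℝ) {V W : Set ℝ} (h : W ⊆ V) (s : ↥(V ∩ I) → k)
    (hs : s ∈ secSub k I V) : resFun k I h s ∈ secSub k I W := by
  obtain ⟨hlc, hcl⟩ := hs
  constructor
  · exact hlc.comp_continuous (Continuous.subtype_mk continuous_subtype_val _)
  · intro x hxW hxcl
    have hsub : {y : ℝ | ∃ h' : y ∈ W ∩ I, resFun k I h s ⟨y, h'⟩ ≠ 0}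
        ⊆ {y : ℝ | ∃ h' : y ∈ V ∩ I, s ⟨y, h'⟩ ≠ 0} := by
      rintro y ⟨h', hy⟩
      exact ⟨⟨h h'.1, h'.2⟩, hy⟩
    obtain ⟨hxVI, hne⟩ := hcl x (h hxW) (closure_mono hsub hxcl)
    exact ⟨⟨hxW, hxVI.2⟩, hne⟩

/-- Restriction as a linear map. -/
def resLM (I : Set ℝ) {V W : Set ℝ} (h : W ⊆ V) : secSub k I V →ₗ[k] secSub k I W where
  toFun s := ⟨resFun k I h s.1, resFun_mem k I h s.1 s.2⟩
  map_add' s t := rfl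
  map_smul' c s := rfl

/-- The presheaf `k_I` on `ℝ`. -/
def intervalPresheaf (I : Set ℝ) : TopCat.Presheaf (ModuleCat.{0} k) (TopCat.of ℝ) where
  obj V := ModuleCat.of k (secSub k I V.unop.1)
  map {V W} f := ModuleCat.ofHom (resLM k I (leOfHom f.unop))
  map_id V := rfl
  map_comp f g := rfl
theorem intervalPresheaf_isSheaf (I : Set ℝ) : (intervalPresheaf k I).IsSheaf := by
  classical
  rw [TopCat.Presheaf.isSheaf_iff_isSheafUniqueGluing]
  intro ι U sf hcomp
  change ∀ i, secSub k I (U i).1 at sf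
  -- pointwise compatibility
  have key : ∀ (i j : ι) (x : ℝ) (hxi : x ∈ (U i).1 ∩ I) (hxj : x ∈ (U j).1 ∩ I),
      (sf i).1 ⟨x, hxi⟩ = (sf j).1 ⟨x, hxj⟩ := by
    intro i j x hxi hxj
    have h := hcomp i j
    have hmem : x ∈ (U i ⊓ U j).1 ∩ I := ⟨⟨hxi.1, hxj.1⟩, hxi.2⟩
    have h2 := congrFun (congrArg Subtype.val h) ⟨x, hmem⟩
    exact h2
  have hmemS : ∀ x : ↥((iSup U : Opens (TopCat.of ℝ)).1 ∩ I), ∃ i, x.1 ∈ U i := by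
    intro x
    exact Opens.mem_iSup.mp x.2.1
  set idx : ↥((iSup U : Opens (TopCat.of ℝ)).1 ∩ I) → ι := fun x => (hmemS x).choose with hidxdef
  have hidx : ∀ x, x.1 ∈ U (idx x) := fun x => (hmemS x).choose_spec
  set s₀ : ↥((iSup U : Opens (TopCat.of ℝ)).1 ∩ I) → k :=
    fun x => (sf (idx x)).1 ⟨x.1, ⟨hidx x, x.2.2⟩⟩ with hs₀def
  have hs₀ : ∀ (x : ↥((iSup U : Opens (TopCat.of ℝ)).1 ∩ I)) (i : ι) (hx : x.1 ∈ U i),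
      s₀ x = (sf i).1 ⟨x.1, ⟨hx, x.2.2⟩⟩ :=
    fun x i hx => key (idx x) i x.1 ⟨hidx x, x.2.2⟩ ⟨hx, x.2.2⟩
  have hlc : IsLocallyConstant s₀ := by
    rw [IsLocallyConstant.iff_exists_open]
    intro x
    obtain ⟨i, hi⟩ := hmemS x
    have hlci : IsLocallyConstant ((sf i).1 : ↥((U i).1 ∩ I) → k) := (sf i).2.1
    obtain ⟨W, hWopen, hpW, hWconst⟩ := hlci.exists_open (⟨x.1, ⟨hi, x.2.2⟩⟩ : ↥((U i).1 ∩ I))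
    obtain ⟨O, hOopen, hWO⟩ := isOpen_induced_iff.mp hWopen
    subst hWO
    refine ⟨Subtype.val ⁻¹' (O ∩ (U i).1), (hOopen.inter (U i).2).preimage continuous_subtype_val,
      ⟨hpW, hi⟩, ?_⟩
    intro y hy
    have hyi : y.1 ∈ U i := hy.2
    rw [hs₀ y i hyi, hs₀ x i hi]
    exact hWconst ⟨y.1, ⟨hyi, y.2.2⟩⟩ hy.1
  have hscl : SuppClosedIn k I (iSup U : Opens (TopCat.of ℝ)).1 s₀ := by
    intro x hxS hxcl
    obtain ⟨i, hi⟩ := Opens.mem_iSup.mp hxS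
    have h1 : x ∈ closure ({y : ℝ | ∃ h : y ∈ (iSup U : Opens (TopCat.of ℝ)).1 ∩ I, s₀ ⟨y, h⟩ ≠ 0}
        ∩ (U i).1) := by
      rw [mem_closure_iff] at hxcl ⊢
      intro O hO hxO
      obtain ⟨z, hz⟩ := hxcl (O ∩ (U i).1) (hO.inter (U i).2) ⟨hxO, hi⟩
      exact ⟨z, hz.1.1, hz.2, hz.1.2⟩
    have hsub : {y : ℝ | ∃ h : y ∈ (iSup U : Opens (TopCat.of ℝ)).1 ∩ I, s₀ ⟨y, h⟩ ≠ 0}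
        ∩ (U i).1 ⊆ {y : ℝ | ∃ h : y ∈ (U i).1 ∩ I, (sf i).1 ⟨y, h⟩ ≠ 0} := by
      rintro y ⟨⟨hy, hne⟩, hyi⟩
      refine ⟨⟨hyi, hy.2⟩, ?_⟩
      rw [← hs₀ ⟨y, hy⟩ i hyi]
      exact hne
    obtain ⟨hyUI, hne⟩ := (sf i).2.2 x hi (closure_mono hsub h1)
    refine ⟨⟨hxS, hyUI.2⟩, ?_⟩
    rw [hs₀ ⟨x, ⟨hxS, hyUI.2⟩⟩ i hyUI.1]
    exact hne
  refine ⟨(⟨s₀, hlc, hscl⟩ : secSub k I (iSup U : Opens (TopCat.of ℝ)).1), ?_, ?_⟩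
  · intro i
    apply Subtype.ext
    funext y
    exact hs₀ ⟨y.1, ⟨leOfHom (Opens.leSupr U i) y.2.1, y.2.2⟩⟩ i y.2.1
  · intro t ht
    apply Subtype.ext
    funext x
    have h := ht (idx x)
    have h2 := congrFun (congrArg Subtype.val h) ⟨x.1, ⟨hidx x, x.2.2⟩⟩
    exact h2

/-- The sheaf `k_I` on `ℝ` for an interval `I`: locally constant functions on `V ∩ I`
whose support is closed in `V`. -/
def intervalSheaf (I : Set ℝ) :
    Sheaf (Opens.grothendieckTopology (TopCat.of ℝ)) (ModuleCat.{0} k) :=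
  ⟨intervalPresheaf k I, intervalPresheaf_isSheaf k I⟩
/-- The category of sheaves of `k`-vector spaces on `ℝ`. -/
abbrev RealSheafCat := Sheaf (Opens.grothendieckTopology (TopCat.of ℝ)) (ModuleCat.{0} k)

instance sheafHomSMul (F G : RealSheafCat k) : SMul k (F ⟶ G) :=
  ⟨fun c f => ⟨c • f.hom⟩⟩

instance sheafHomModule (F G : RealSheafCat k) : Module k (F ⟶ G) :=
  Function.Injective.module k
    { toFun := fun f : F ⟶ G => f.hom
      map_zero' := rfl
      map_add' := fun _ _ => rfl }
    (fun _ _ h => Sheaf.hom_ext h) (fun _ _ => rfl)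

instance : HasExt.{1} (RealSheafCat k) := by
  letI := HasDerivedCategory.standard (RealSheafCat k)
  exact hasExt_of_hasDerivedCategory _

/-- The interval `(a, b)` with possibly infinite endpoints. -/
def Ioo' (a b : EReal) : Set ℝ := {x : ℝ | a < (x : EReal) ∧ (x : EReal) < b}

/-- The interval `[a, b)` with a possibly infinite right endpoint. -/
def Ico' (a : ℝ) (b : EReal) : Set ℝ := {x : ℝ | a ≤ x ∧ (x : EReal) < b}

/-- The interval `(a, b]` with a possibly infinite left endpoint. -/
def Ioc' (a : EReal) (b : ℝ) : Set ℝ := {x : ℝ | a < (x : EReal) ∧ x ≤ b}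

/-- Identification of sheaves on the topological space `ℝ` with objects of `RealSheafCat`. -/
def toRS (F : TopCat.Sheaf (ModuleCat.{0} k) (TopCat.of ℝ)) : RealSheafCat k := F

/-! A morphism `f : k_U ⟶ k_Z` (with `U` open, `Z` closed) is determined by the section
`f(1_U)` of `k_Z` over `U`. Indeed, a section `s` of `k_U` vanishes near every point outside `U`
because its support is closed, so `f s` vanishes there too; near a point `x ∈ U` the section `s`
is the constant `s x`, so `(f s) x = s x • f(1_U) x`. As `f(1_U)` is locally constant on `U ∩ Z`,
it is constant when `U ∩ Z` is connected, and extension by zero realises the constant `1`: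
evaluating `f(1_U)` at one point of `U ∩ Z` identifies `Hom(k_U, k_Z)` with `k`. -/

open Opposite

section

variable {k}

def sectionSupport (I V : Set ℝ) (s : ↥(V ∩ I) → k) : Set ℝ :=
  {y | ∃ h : y ∈ V ∩ I, s ⟨y, h⟩ ≠ 0}

lemma apply_eq_zero_of_notMem_closure_sectionSupport {I V : Set ℝ} {s : ↥(V ∩ I) → k}
    {y : ↥(V ∩ I)} (hy : y.1 ∉ closure (sectionSupport I V s)) : s y = 0 := by
  by_contra hne
  exact hy (subset_closure ⟨y.2, hne⟩)

lemma mem_of_mem_closure_sectionSupport {I V : Set ℝ} {s : secSub k I V} {x : ℝ} (hxV : x ∈ V)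
    (hx : x ∈ closure (sectionSupport I V s.1)) : x ∈ I :=
  (s.2.2 x hxV hx).1.2

variable (k) in
def constOneSec (U W : Set ℝ) (hWU : W ⊆ U) : secSub k U W :=
  ⟨fun _ => 1, IsLocallyConstant.const 1, fun _ hxW _ => ⟨⟨hxW, hWU hxW⟩, one_ne_zero⟩⟩

def homApp {U Z : Set ℝ} (f : intervalSheaf k U ⟶ intervalSheaf k Z) (V : Opens (TopCat.of ℝ)) :
    secSub k U V →ₗ[k] secSub k Z V :=
  (f.hom.app (op V)).hom

lemma intervalSheaf_hom_ext {U Z : Set ℝ} {f g : intervalSheaf k U ⟶ intervalSheaf k Z}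
    (h : ∀ (V : Opens (TopCat.of ℝ)) (s : secSub k U V.1) (y : ↥(V.1 ∩ Z)),
      (homApp f V s).1 y = (homApp g V s).1 y) : f = g := by
  apply Sheaf.hom_ext
  ext V s
  exact Subtype.ext (funext (h V.unop s))

lemma homApp_resLM_apply {U Z : Set ℝ} (f : intervalSheaf k U ⟶ intervalSheaf k Z)
    {W V : Opens (TopCat.of ℝ)} (h : W ≤ V) (s : secSub k U V.1) {x : ℝ} (hx : x ∈ W.1 ∩ Z) :
    (homApp f W (resLM k U h s)).1 ⟨x, hx⟩ = (homApp f V s).1 ⟨x, h hx.1, hx.2⟩ :=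
  congrArg (fun t => t.1 ⟨x, hx⟩) (ConcreteCategory.congr_hom (f.hom.naturality (homOfLE h).op) s)

lemma homApp_apply_eq_zero_of_notMem {U Z : Set ℝ} (f : intervalSheaf k U ⟶ intervalSheaf k Z)
    (V : Opens (TopCat.of ℝ)) (s : secSub k U V.1) {x : ℝ} (hx : x ∈ V.1 ∩ Z) (hxU : x ∉ U) :
    (homApp f V s).1 ⟨x, hx⟩ = 0 := by
  let W : Opens (TopCat.of ℝ) :=
    ⟨(closure (sectionSupport U V.1 s.1))ᶜ ∩ V.1, isClosed_closure.isOpen_compl.inter V.2⟩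
  have hWV : W ≤ V := inter_subset_right
  have hxW : x ∈ W.1 ∩ Z :=
    ⟨⟨fun hcl => hxU (mem_of_mem_closure_sectionSupport hx.1 hcl), hx.1⟩, hx.2⟩
  have hres : resLM k U hWV s = 0 :=
    Subtype.ext (funext fun y => apply_eq_zero_of_notMem_closure_sectionSupport
      (y := ⟨y.1, hWV y.2.1, y.2.2⟩) y.2.1.1)
  rw [← homApp_resLM_apply f hWV s hxW, hres, map_zero]
  rfl

lemma homApp_apply_eq_smul {U Z : Set ℝ} (hU : IsOpen U)
    (f : intervalSheaf k U ⟶ intervalSheaf k Z) (V : Opens (TopCat.of ℝ)) (s : secSub k U V.1)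
    {x : ℝ} (hx : x ∈ V.1 ∩ Z) (hxU : x ∈ U) :
    (homApp f V s).1 ⟨x, hx⟩ = s.1 ⟨x, hx.1, hxU⟩ •
      (homApp f ⟨U, hU⟩ (constOneSec k U U subset_rfl)).1 ⟨x, hxU, hx.2⟩ := by
  obtain ⟨T, hT, hxT, hconst⟩ := s.2.1.exists_open (⟨x, hx.1, hxU⟩ : ↥(V.1 ∩ U))
  obtain ⟨O, hO, rfl⟩ := isOpen_induced_iff.mp hT
  let W : Opens (TopCat.of ℝ) := ⟨O ∩ V.1 ∩ U, (hO.inter V.2).inter hU⟩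
  have hWV : W ≤ V := fun y hy => hy.1.2
  have hWU : W ≤ ⟨U, hU⟩ := fun y hy => hy.2
  have hxW : x ∈ W.1 ∩ Z := ⟨⟨⟨hxT, hx.1⟩, hxU⟩, hx.2⟩
  have hres : resLM k U hWV s =
      s.1 ⟨x, hx.1, hxU⟩ • resLM k U hWU (constOneSec k U U subset_rfl) :=
    Subtype.ext (funext fun y =>
      (hconst ⟨y.1, y.2.1.1.2, y.2.2⟩ y.2.1.1.1).trans (mul_one _).symm)
  rw [← homApp_resLM_apply f hWV s hxW, hres, map_smul]
  exact congrArg (s.1 ⟨x, hx.1, hxU⟩ • ·) (homApp_resLM_apply f hWU _ hxW)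

open Classical in
def extendByZeroFun (U Z V : Set ℝ) (s : ↥(V ∩ U) → k) : ↥(V ∩ Z) → k :=
  fun y => if h : y.1 ∈ U then s ⟨y.1, y.2.1, h⟩ else 0

lemma sectionSupport_extendByZeroFun {U Z V : Set ℝ} (s : ↥(V ∩ U) → k) :
    sectionSupport Z V (extendByZeroFun U Z V s) = sectionSupport U V s ∩ Z := by
  ext y
  simp only [sectionSupport, extendByZeroFun, mem_ofPred_eq, mem_inter_iff]
  constructor
  · rintro ⟨h, hy⟩
    by_cases hyU : y ∈ U
    · rw [dif_pos hyU] at hy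
      exact ⟨⟨⟨h.1, hyU⟩, hy⟩, h.2⟩
    · exact absurd (dif_neg hyU) hy
  · rintro ⟨⟨h, hy⟩, hyZ⟩
    exact ⟨⟨h.1, hyZ⟩, by rwa [dif_pos h.2]⟩

lemma isLocallyConstant_extendByZeroFun {U Z V : Set ℝ} (hU : IsOpen U) (s : secSub k U V) :
    IsLocallyConstant (extendByZeroFun U Z V s.1) := by
  rw [IsLocallyConstant.iff_exists_open]
  intro y
  by_cases hy : y.1 ∈ U
  · obtain ⟨T, hT, hyT, hconst⟩ := s.2.1.exists_open (⟨y.1, y.2.1, hy⟩ : ↥(V ∩ U))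
    obtain ⟨O, hO, rfl⟩ := isOpen_induced_iff.mp hT
    refine ⟨Subtype.val ⁻¹' (O ∩ U), (hO.inter hU).preimage continuous_subtype_val, ⟨hyT, hy⟩,
      fun z hz => ?_⟩
    simp only [extendByZeroFun, dif_pos hz.2, dif_pos hy]
    exact hconst ⟨z.1, z.2.1, hz.2⟩ hz.1
  · have hy' : y.1 ∉ closure (sectionSupport U V s.1) :=
      fun h => hy (mem_of_mem_closure_sectionSupport y.2.1 h)
    refine ⟨Subtype.val ⁻¹' (closure (sectionSupport U V s.1))ᶜ,
      isClosed_closure.isOpen_compl.preimage continuous_subtype_val, hy', fun z hz => ?_⟩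
    simp only [extendByZeroFun, dif_neg hy]
    split_ifs with hzU
    · exact apply_eq_zero_of_notMem_closure_sectionSupport (y := ⟨z.1, z.2.1, hzU⟩) hz
    · rfl

lemma suppClosedIn_extendByZeroFun {U Z V : Set ℝ} (hZ : IsClosed Z) (s : secSub k U V) :
    SuppClosedIn k Z V (extendByZeroFun U Z V s.1) := by
  intro x hxV hx
  change x ∈ closure (sectionSupport Z V (extendByZeroFun U Z V s.1)) at hx
  change x ∈ sectionSupport Z V (extendByZeroFun U Z V s.1)
  rw [sectionSupport_extendByZeroFun] at hx ⊢
  exact ⟨s.2.2 x hxV (closure_mono inter_subset_left hx),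
    hZ.closure_subset (closure_mono inter_subset_right hx)⟩

def extendByZeroLM {U Z : Set ℝ} (hU : IsOpen U) (hZ : IsClosed Z) (V : Set ℝ) :
    secSub k U V →ₗ[k] secSub k Z V where
  toFun s := ⟨extendByZeroFun U Z V s.1, isLocallyConstant_extendByZeroFun hU s,
    suppClosedIn_extendByZeroFun hZ s⟩
  map_add' s t := by
    ext y
    by_cases h : y.1 ∈ U <;> simp [extendByZeroFun, h]
  map_smul' c s := by
    ext y
    by_cases h : y.1 ∈ U <;> simp [extendByZeroFun, h]

def extendByZero {U Z : Set ℝ} (hU : IsOpen U) (hZ : IsClosed Z) :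
    intervalSheaf k U ⟶ intervalSheaf k Z :=
  ⟨{ app := fun V => ModuleCat.ofHom (extendByZeroLM hU hZ V.unop.1)
     naturality := fun _ _ _ => rfl }⟩

def evalAt {U Z : Set ℝ} (hU : IsOpen U) (x₀ : ℝ) (h₀ : x₀ ∈ U ∩ Z) :
    (intervalSheaf k U ⟶ intervalSheaf k Z) →ₗ[k] k where
  toFun f := (homApp f ⟨U, hU⟩ (constOneSec k U U subset_rfl)).1 ⟨x₀, h₀⟩
  map_add' _ _ := rfl
  map_smul' _ _ := rfl

lemma evalAt_extendByZero {U Z : Set ℝ} (hU : IsOpen U) (hZ : IsClosed Z) {x₀ : ℝ}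
    (h₀ : x₀ ∈ U ∩ Z) : evalAt hU x₀ h₀ (extendByZero (k := k) hU hZ) = 1 := by
  change extendByZeroFun U Z U (fun _ => 1) ⟨x₀, h₀⟩ = 1
  exact dif_pos h₀.1

lemma eq_zero_of_homApp_constOneSec_eq_zero {U Z : Set ℝ} (hU : IsOpen U)
    (f : intervalSheaf k U ⟶ intervalSheaf k Z)
    (h : homApp f ⟨U, hU⟩ (constOneSec k U U subset_rfl) = 0) : f = 0 :=
  intervalSheaf_hom_ext fun V s ⟨y, hy⟩ => by
    by_cases hyU : y ∈ U
    · rw [homApp_apply_eq_smul hU f V s hy hyU, h]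
      exact smul_zero _
    · exact homApp_apply_eq_zero_of_notMem f V s hy hyU

lemma evalAt_injective {U Z : Set ℝ} (hU : IsOpen U) (hconn : IsPreconnected (U ∩ Z))
    {x₀ : ℝ} (h₀ : x₀ ∈ U ∩ Z) : Function.Injective (evalAt (k := k) hU x₀ h₀) := by
  refine (injective_iff_map_eq_zero _).mpr fun f hf => ?_
  have : PreconnectedSpace ↥(U ∩ Z) := isPreconnected_iff_preconnectedSpace.mp hconn
  refine eq_zero_of_homApp_constOneSec_eq_zero hU f (Subtype.ext (funext fun y => ?_))
  exact ((homApp f _ _).2.1.apply_eq_of_preconnectedSpace y ⟨x₀, h₀⟩).trans hf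

lemma rank_intervalSheaf_hom_eq_one {U Z : Set ℝ} (hU : IsOpen U) (hZ : IsClosed Z)
    (hconn : IsPreconnected (U ∩ Z)) (hne : (U ∩ Z).Nonempty) :
    Module.rank k (intervalSheaf k U ⟶ intervalSheaf k Z) = 1 := by
  obtain ⟨x₀, h₀⟩ := hne
  have hsurj : Function.Surjective (evalAt (k := k) hU x₀ h₀) := fun r =>
    ⟨r • extendByZero hU hZ, by rw [map_smul, evalAt_extendByZero, smul_eq_mul, mul_one]⟩
  exact (LinearEquiv.ofBijective _ ⟨evalAt_injective hU hconn h₀, hsurj⟩).rank_eq.trans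
    (Module.rank_self k)

lemma intervalSheaf_hom_eq_zero_of_disjoint {U Z : Set ℝ} (h : Disjoint U Z)
    (f : intervalSheaf k U ⟶ intervalSheaf k Z) : f = 0 :=
  intervalSheaf_hom_ext fun V s y =>
    homApp_apply_eq_zero_of_notMem f V s y.2 (disjoint_right.mp h y.2.2)

end

theorem hom_open_compact_general (k : Type) [Field k] (a b : EReal) (c d : ℝ) :
    ((Ioo' a b ∩ Set.Icc c d).Nonempty →
      Module.rank k (intervalSheaf k (Ioo' a b) ⟶ intervalSheaf k (Set.Icc c d)) = 1) ∧
    (¬ (Ioo' a b ∩ Set.Icc c d).Nonempty →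
      ∀ f : intervalSheaf k (Ioo' a b) ⟶ intervalSheaf k (Set.Icc c d), f = 0) := by
  have hU : IsOpen (Ioo' a b) := isOpen_Ioo.preimage continuous_coe_real_ereal
  have hconn : IsPreconnected (Ioo' a b ∩ Icc c d) :=
    ((ordConnected_Ioo.preimage_mono EReal.coe_strictMono.monotone).inter
      ordConnected_Icc).isPreconnected
  refine ⟨rank_intervalSheaf_hom_eq_one hU isClosed_Icc hconn, fun hempty => ?_⟩
  exact intervalSheaf_hom_eq_zero_of_disjoint
    (disjoint_iff_inter_eq_empty.mpr (not_nonempty_iff_eq_empty.mp hempty))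

/-- For `a ∈ ℝ ∪ {−∞}`, `b ∈ ℝ ∪ {+∞}` with `a < b` and real numbers `c ≤ d`,
the space `Hom(k_{(a,b)}, k_{[c,d]})` is one-dimensional over `k` if `(a,b) ∩ [c,d] ≠ ∅`,
and is zero otherwise. -/
theorem hom_open_compact (k : Type) [Field k] (a b : EReal) (hab : a < b)
    (c d : ℝ) (hcd : c ≤ d) :
    ((Ioo' a b ∩ Set.Icc c d).Nonempty →
      Module.rank k (intervalSheaf k (Ioo' a b) ⟶ intervalSheaf k (Set.Icc c d)) = 1) ∧
    (¬ (Ioo' a b ∩ Set.Icc c d).Nonempty →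
      ∀ f : intervalSheaf k (Ioo' a b) ⟶ intervalSheaf k (Set.Icc c d), f = 0) :=
  hom_open_compact_general k a b c d

end
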